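/- (Static Duality: distributional equivalence with the masked-diffusion forward marginal.) Let ε have i.i.d. standard Gaussian coordinates, let γ ∈ (0,1), let r = F_Y^{-1}(γ), α̃ = r/√(1+r²), σ̃ = 1/√(1+r²), and w = α̃·e_k + σ̃·ε. Then the law of the discrete observation z = P(w) on the two-point set {x0, e_K} is γ·δ_{x0} + (1−γ)·δ_{e_K}; i.e., P(z = x0) = γ and P(z = e_K) = 1 − γ, matching the masked diffusion forward marginal q(z | x0). -/

import Mathlib

/-!
Write `s = 1/√(1+r²) > 0`, so that `w = s • (r • e_k + ε)`. Since `P` only compares coordinates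
and `max_{j≠k} w_j = s · max_{j≠k} ε_j`, we get `P(w) = x0` exactly when `Y < r`; hence `z` is a
two-valued function of the event `{Y < r}`. Two distinct coordinates of `ε` are independent with an
atomless law, so each tie `ε_j = ε_k + r` is null, hence `{Y = r}` is null and
`P(Y < r) = F_Y(r) = γ`.
-/

open MeasureTheory ProbabilityTheory

noncomputable section

/-- The maximum of the coordinates of `w` over all indices `j ≠ k`. -/
def maxOther {K : ℕ} (hK : 2 ≤ K) (k : Fin K) (w : Fin K → ℝ) : ℝ :=
  (Finset.univ.erase k).sup'
    (by
      apply Finset.card_pos.mp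
      rw [Finset.card_erase_of_mem (Finset.mem_univ k), Finset.card_univ, Fintype.card_fin]
      omega) w

/-- The index of the mask state `[M]` (the last coordinate). -/
def maskIdx {K : ℕ} (hK : 2 ≤ K) : Fin K := ⟨K - 1, by omega⟩

/-- The projection operator `P`: it keeps the clean one-hot vector `x0 = e_k` if the signal
coordinate strictly dominates all other coordinates, otherwise collapses to the mask
vector `e_K`. -/
def proj {K : ℕ} (hK : 2 ≤ K) (k : Fin K) (w : Fin K → ℝ) : Fin K → ℝ :=
  if maxOther hK k w < w k then Pi.single k 1 else Pi.single (maskIdx hK) 1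

/-- The `K`-fold product of standard Gaussian measures: the law of `ε` with i.i.d.
standard Gaussian `N(0,1)` coordinates. -/
def gpi (K : ℕ) : Measure (Fin K → ℝ) :=
  Measure.pi fun _ => gaussianReal 0 1

/-- The scalar `Y(ε) = max_{j ≠ k} ε_j − ε_k`. -/
def Yfun {K : ℕ} (hK : 2 ≤ K) (k : Fin K) (ε : Fin K → ℝ) : ℝ :=
  maxOther hK k ε - ε k

/-- `F_Y`, the cumulative distribution function of `Y = max_{j ≠ k} ε_j − ε_k` for `ε` with
i.i.d. standard Gaussian coordinates. -/
def FY {K : ℕ} (hK : 2 ≤ K) (k : Fin K) : ℝ → ℝ :=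
  fun y => cdf ((gpi K).map (Yfun hK k)) y

namespace MeasureTheory.Measure

variable {α β : Type*} [MeasurableSpace α] [MeasurableSpace β]

lemma map_ite_const (μ : Measure α) {p : α → Prop} [DecidablePred p]
    (hp : MeasurableSet {x | p x}) (a b : β) :
    μ.map (fun x => if p x then a else b) = μ {x | p x} • dirac a + μ {x | p x}ᶜ • dirac b := by
  conv_lhs => rw [← μ.restrict_add_restrict_compl hp]
  rw [Measure.map_add _ _ (Measurable.ite hp measurable_const measurable_const)]
  congr 1
  · rw [map_congr (g := fun _ => a), map_const, restrict_apply_univ]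
    filter_upwards [ae_restrict_mem hp] with x hx using if_pos hx
  · rw [map_congr (g := fun _ => b), map_const, restrict_apply_univ]
    filter_upwards [ae_restrict_mem hp.compl] with x hx using if_neg hx

lemma prod_fst_eq_snd_add_null (μ ν : Measure ℝ) [SFinite ν] [NullSingletonClass ν] (c : ℝ) :
    μ.prod ν {p | p.1 = p.2 + c} = 0 := by
  rw [measure_prod_null (measurableSet_eq_fun measurable_fst (measurable_snd.add_const c))]
  refine Filter.Eventually.of_forall fun x => ?_
  have : Prod.mk x ⁻¹' {p : ℝ × ℝ | p.1 = p.2 + c} = {x - c} := by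
    ext y
    simp only [Set.mem_preimage, Set.mem_ofPred_eq, Set.mem_singleton_iff]
    constructor <;> intro h <;> linarith
  simp [this]

variable {ι : Type*} [Fintype ι]

lemma pi_map_prodMk_apply {X : ι → Type*} [∀ i, MeasurableSpace (X i)] (μ : ∀ i, Measure (X i))
    [∀ i, IsProbabilityMeasure (μ i)] {i j : ι} (hij : i ≠ j) :
    (Measure.pi μ).map (fun x => (x i, x j)) = (μ i).prod (μ j) := by
  have hind : IndepFun (fun x : ∀ i, X i => x i) (fun x => x j) (Measure.pi μ) :=
    (iIndepFun_pi (X := fun _ => id) fun _ => aemeasurable_id).indepFun hij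
  rw [(indepFun_iff_map_prod_eq_prod_map_map (measurable_pi_apply i).aemeasurable
      (measurable_pi_apply j).aemeasurable).1 hind,
    (measurePreserving_eval μ i).map_eq, (measurePreserving_eval μ j).map_eq]

lemma pi_apply_eq_apply_add_null (μ : ι → Measure ℝ) [∀ i, IsProbabilityMeasure (μ i)]
    [∀ i, NullSingletonClass (μ i)] {i j : ι} (hij : i ≠ j) (c : ℝ) :
    Measure.pi μ {x | x i = x j + c} = 0 := by
  have hS : MeasurableSet {p : ℝ × ℝ | p.1 = p.2 + c} :=
    measurableSet_eq_fun measurable_fst (measurable_snd.add_const c)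
  rw [show {x : ι → ℝ | x i = x j + c} = (fun x => (x i, x j)) ⁻¹' {p | p.1 = p.2 + c} from rfl,
    ← map_apply (by fun_prop) hS, pi_map_prodMk_apply μ hij, prod_fst_eq_snd_add_null]

end MeasureTheory.Measure

section

variable {K : ℕ} (hK : 2 ≤ K) (k : Fin K)

instance : IsProbabilityMeasure (gpi K) := by unfold gpi; infer_instance

lemma maxOther_congr {w v : Fin K → ℝ} (h : ∀ j ≠ k, w j = v j) :
    maxOther hK k w = maxOther hK k v :=
  Finset.sup'_congr _ rfl fun j hj => h j (Finset.ne_of_mem_erase hj)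

lemma maxOther_smul {s : ℝ} (hs : 0 ≤ s) (w : Fin K → ℝ) :
    maxOther hK k (s • w) = s * maxOther hK k w :=
  (Finset.apply_sup'_eq_sup'_comp _ (s * ·) fun x y => mul_max_of_nonneg x y hs).symm

lemma exists_maxOther_eq (w : Fin K → ℝ) : ∃ j ≠ k, maxOther hK k w = w j := by
  obtain ⟨j, hj, hjw⟩ := Finset.exists_mem_eq_sup' _ w
  exact ⟨j, Finset.ne_of_mem_erase hj, hjw⟩

lemma measurable_maxOther : Measurable (maxOther hK k) := by
  convert Finset.measurable_sup' (α := ℝ) _ fun j _ => measurable_pi_apply j using 1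
  funext w
  rw [Finset.sup'_apply]
  rfl

lemma measurable_Yfun : Measurable (Yfun hK k) :=
  (measurable_maxOther hK k).sub (measurable_pi_apply k)

lemma proj_smul_single_add {s : ℝ} (hs : 0 < s) (c : ℝ) (ε : Fin K → ℝ) :
    proj hK k (c • Pi.single k 1 + s • ε)
      = if Yfun hK k ε < c / s then Pi.single k 1 else Pi.single (maskIdx hK) 1 := by
  have hmax : maxOther hK k (c • Pi.single k 1 + s • ε) = s * maxOther hK k ε := by
    rw [maxOther_congr hK k (v := s • ε) fun j hj => by simp [hj], maxOther_smul hK k hs.le]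
  have hcoord : (c • Pi.single k 1 + s • ε : Fin K → ℝ) k = c + s * ε k := by simp
  refine if_congr ?_ rfl rfl
  rw [hmax, hcoord, Yfun, lt_div_iff₀ hs]
  constructor <;> intro h <;> linarith

lemma gpi_Yfun_eq_null (r : ℝ) : gpi K {ε | Yfun hK k ε = r} = 0 := by
  have : NullSingletonClass (gaussianReal 0 1) := nullSingletonClass_gaussianReal one_ne_zero
  refine measure_mono_null (t := ⋃ j ∈ Finset.univ.erase k, {ε | ε j = ε k + r}) ?_ ?_
  · intro ε (hε : maxOther hK k ε - ε k = r)
    obtain ⟨j, hjk, hj⟩ := exists_maxOther_eq hK k ε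
    simp only [Set.mem_iUnion, Set.mem_ofPred_eq]
    exact ⟨j, Finset.mem_erase.2 ⟨hjk, Finset.mem_univ j⟩, by linarith⟩
  · exact (measure_biUnion_null_iff (Finset.univ.erase k).countable_toSet).2 fun j hj =>
      Measure.pi_apply_eq_apply_add_null _ (Finset.ne_of_mem_erase hj) r

lemma gpi_Yfun_lt (r : ℝ) : gpi K {ε | Yfun hK k ε < r} = ENNReal.ofReal (FY hK k r) := by
  have : IsProbabilityMeasure ((gpi K).map (Yfun hK k)) :=
    Measure.isProbabilityMeasure_map (measurable_Yfun hK k).aemeasurable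
  rw [FY, ofReal_cdf, Measure.map_apply (measurable_Yfun hK k) measurableSet_Iic]
  have hsplit : Yfun hK k ⁻¹' Set.Iic r = {ε | Yfun hK k ε < r} ∪ {ε | Yfun hK k ε = r} := by
    ext ε
    simp only [Set.mem_preimage, Set.mem_Iic, Set.mem_union, Set.mem_ofPred_eq]
    exact le_iff_lt_or_eq
  rw [hsplit, measure_congr
    (union_ae_eq_left_of_ae_eq_empty (ae_eq_empty.2 (gpi_Yfun_eq_null hK k r)))]

lemma gpi_Yfun_lt_compl (r : ℝ) :
    gpi K {ε | Yfun hK k ε < r}ᶜ = ENNReal.ofReal (1 - FY hK k r) := by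
  have hF : 0 ≤ FY hK k r := cdf_nonneg _ r
  rw [prob_compl_eq_one_sub (measurableSet_lt (measurable_Yfun hK k) measurable_const),
    gpi_Yfun_lt, ← ENNReal.ofReal_one, ← ENNReal.ofReal_sub _ hF]

end

theorem stmt11_general (K : ℕ) (hK : 2 ≤ K) (k : Fin K) (hk : k ≠ maskIdx hK)
    (γ : ℝ) (r : ℝ) (hr : FY hK k r = γ) :
    (gpi K).map (fun ε => proj hK k
        ((r / Real.sqrt (1 + r ^ 2)) • (Pi.single k 1 : Fin K → ℝ)
          + (1 / Real.sqrt (1 + r ^ 2)) • ε))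
      = ENNReal.ofReal γ • Measure.dirac (Pi.single k 1 : Fin K → ℝ)
        + ENNReal.ofReal (1 - γ) • Measure.dirac (Pi.single (maskIdx hK) 1 : Fin K → ℝ)
    ∧ gpi K {ε | proj hK k
        ((r / Real.sqrt (1 + r ^ 2)) • (Pi.single k 1 : Fin K → ℝ)
          + (1 / Real.sqrt (1 + r ^ 2)) • ε) = (Pi.single k 1 : Fin K → ℝ)}
      = ENNReal.ofReal γ
    ∧ gpi K {ε | proj hK k
        ((r / Real.sqrt (1 + r ^ 2)) • (Pi.single k 1 : Fin K → ℝ)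
          + (1 / Real.sqrt (1 + r ^ 2)) • ε) = (Pi.single (maskIdx hK) 1 : Fin K → ℝ)}
      = ENNReal.ofReal (1 - γ) := by
  have hz (ε : Fin K → ℝ) :
      proj hK k ((r / Real.sqrt (1 + r ^ 2)) • Pi.single k 1 + (1 / Real.sqrt (1 + r ^ 2)) • ε)
        = if Yfun hK k ε < r then Pi.single k 1 else Pi.single (maskIdx hK) 1 := by
    have hs : 0 < Real.sqrt (1 + r ^ 2) := by positivity
    rw [proj_smul_single_add hK k (by positivity), div_div_div_cancel_right₀ hs.ne', div_one]
  have hab : (Pi.single k 1 : Fin K → ℝ) ≠ Pi.single (maskIdx hK) 1 := fun h => by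
    simpa [hk] using congr_fun h k
  simp only [hz, ite_eq_left_iff, ite_eq_right_iff, hab, hab.symm, imp_false, not_not]
  rw [← hr, ← gpi_Yfun_lt, ← gpi_Yfun_lt_compl]
  exact ⟨Measure.map_ite_const _ (measurableSet_lt (measurable_Yfun hK k) measurable_const) _ _,
    rfl, rfl⟩

/-- Static Duality: With `γ ∈ (0,1)`, `r = F_Y⁻¹(γ)`, `α̃ = r/√(1+r²)`,
`σ̃ = 1/√(1+r²)`, `w = α̃ • e_k + σ̃ • ε`, the law of `z = P(w)` is
`γ·δ_{x0} + (1−γ)·δ_{e_K}`; i.e. `P(z = x0) = γ` and `P(z = e_K) = 1 − γ`. -/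
theorem stmt11 (K : ℕ) (hK : 2 ≤ K) (k : Fin K) (hk : k ≠ maskIdx hK)
    (γ : ℝ) (hγ : γ ∈ Set.Ioo (0 : ℝ) 1) (r : ℝ) (hr : FY hK k r = γ) :
    (gpi K).map (fun ε => proj hK k
        ((r / Real.sqrt (1 + r ^ 2)) • (Pi.single k 1 : Fin K → ℝ)
          + (1 / Real.sqrt (1 + r ^ 2)) • ε))
      = ENNReal.ofReal γ • Measure.dirac (Pi.single k 1 : Fin K → ℝ)
        + ENNReal.ofReal (1 - γ) • Measure.dirac (Pi.single (maskIdx hK) 1 : Fin K → ℝ)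
    ∧ gpi K {ε | proj hK k
        ((r / Real.sqrt (1 + r ^ 2)) • (Pi.single k 1 : Fin K → ℝ)
          + (1 / Real.sqrt (1 + r ^ 2)) • ε) = (Pi.single k 1 : Fin K → ℝ)}
      = ENNReal.ofReal γ
    ∧ gpi K {ε | proj hK k
        ((r / Real.sqrt (1 + r ^ 2)) • (Pi.single k 1 : Fin K → ℝ)
          + (1 / Real.sqrt (1 + r ^ 2)) • ε) = (Pi.single (maskIdx hK) 1 : Fin K → ℝ)}
      = ENNReal.ofReal (1 - γ) :=
  stmt11_general K hK k hk γ r hr
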